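/- Let H₁,…,H_m be real Hilbert spaces, and for each i ∈ {1,…,m} let G_i ⊆ H_i be a finite set of cardinality 2ⁿ with ‖h‖ ≤ M_g for every h ∈ G_i, and let g_i* lie in the closure of the convex hull of G_i. Then there exist ḡ_i in the convex hull of G_i for each i such that Σ_{i=1}^m ‖ḡ_i − g_i*‖² ≤ (m·M_g² − Σ_{i=1}^m ‖g_i*‖²)/2ⁿ. -/

import Mathlib

open RealInnerProductSpace

section Aux

variable {E : Type*} [NormedAddCommGroup E] [InnerProductSpace ℝ E]

private lemma exists_le_weighted (G : Finset E) (p : E → ℝ)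
    (hp0 : ∀ h ∈ G, 0 ≤ p h) (hp1 : ∑ h ∈ G, p h = 1) (f : E → ℝ) :
    ∃ h ∈ G, f h ≤ ∑ h ∈ G, p h * f h := by
  by_contra hcon
  push_neg at hcon
  have hne : ∃ h ∈ G, p h ≠ 0 := by
    by_contra h0
    push_neg at h0
    have : (∑ h ∈ G, p h) = 0 := Finset.sum_eq_zero h0
    rw [hp1] at this; norm_num at this
  obtain ⟨h0, hh0, hph0⟩ := hne
  have hlt : ∑ h ∈ G, p h * (∑ x ∈ G, p x * f x) < ∑ h ∈ G, p h * f h := by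
    apply Finset.sum_lt_sum
    · intro i hi
      exact mul_le_mul_of_nonneg_left (le_of_lt (hcon i hi)) (hp0 i hi)
    · exact ⟨h0, hh0, by
        have := hcon h0 hh0
        have hp : 0 < p h0 := lt_of_le_of_ne (hp0 h0 hh0) (Ne.symm hph0)
        exact mul_lt_mul_of_pos_left this hp⟩
  rw [← Finset.sum_mul, hp1, one_mul] at hlt
  exact lt_irrefl _ hlt

private lemma maurey_step (G : Finset E) (p : E → ℝ) (M : ℝ)
    (hp0 : ∀ h ∈ G, 0 ≤ p h) (hp1 : ∑ h ∈ G, p h = 1)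
    (g : E) (hmean : ∑ h ∈ G, p h • h = g)
    (hbd : ∀ h ∈ G, ‖h‖ ≤ M) (a : E) (c : ℝ) :
    ∃ h ∈ G, ‖a + c • (h - g)‖ ^ 2 ≤ ‖a‖ ^ 2 + c ^ 2 * (M ^ 2 - ‖g‖ ^ 2) := by
  obtain ⟨h, hh, hle⟩ := exists_le_weighted G p hp0 hp1
    (fun h => ‖a + c • (h - g)‖ ^ 2)
  refine ⟨h, hh, hle.trans ?_⟩
  have expand : ∀ h : E, ‖a + c • (h - g)‖ ^ 2
      = ‖a‖ ^ 2 + 2 * c * ⟪a, h - g⟫ + c ^ 2 * (‖h‖ ^ 2 - 2 * ⟪h, g⟫ + ‖g‖ ^ 2) := by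
    intro h
    have e1 : ‖a + c • (h - g)‖ ^ 2
        = ‖a‖ ^ 2 + 2 * ⟪a, c • (h - g)⟫ + ‖c • (h - g)‖ ^ 2 := by
      rw [← real_inner_self_eq_norm_sq, ← real_inner_self_eq_norm_sq,
        ← real_inner_self_eq_norm_sq]
      rw [inner_add_add_self, real_inner_comm (c • (h - g)) a]
      ring
    rw [e1, real_inner_smul_right, norm_smul]
    have e2 : ‖h - g‖ ^ 2 = ‖h‖ ^ 2 - 2 * ⟪h, g⟫ + ‖g‖ ^ 2 := by
      rw [← real_inner_self_eq_norm_sq, ← real_inner_self_eq_norm_sq,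
        ← real_inner_self_eq_norm_sq, inner_sub_sub_self, real_inner_comm g h]
      ring
    rw [mul_pow, e2]
    have : |c| ^ 2 = c ^ 2 := sq_abs c
    rw [Real.norm_eq_abs, this]
    ring
  calc ∑ h ∈ G, p h * ‖a + c • (h - g)‖ ^ 2
      = ∑ h ∈ G, (p h * ‖a‖ ^ 2 + (2 * c) * ⟪a, p h • (h - g)⟫
          + c ^ 2 * (p h * ‖h‖ ^ 2 - 2 * ⟪p h • h, g⟫ + p h * ‖g‖ ^ 2)) := by
        apply Finset.sum_congr rfl
        intro h hh
        rw [expand h, real_inner_smul_right, real_inner_smul_left]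
        ring
    _ = ‖a‖ ^ 2 + (2 * c) * ⟪a, ∑ h ∈ G, p h • (h - g)⟫
          + c ^ 2 * ((∑ h ∈ G, p h * ‖h‖ ^ 2) - 2 * ⟪∑ h ∈ G, p h • h, g⟫ + ‖g‖ ^ 2) := by
        have s1 : ∑ h ∈ G, p h * ‖a‖ ^ 2 = ‖a‖ ^ 2 := by
          rw [← Finset.sum_mul, hp1, one_mul]
        have s2 : ∑ h ∈ G, (2 * c) * ⟪a, p h • (h - g)⟫
            = (2 * c) * ⟪a, ∑ h ∈ G, p h • (h - g)⟫ := by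
          rw [← Finset.mul_sum, ← inner_sum]
        have s3 : ∑ h ∈ G, c ^ 2 * (p h * ‖h‖ ^ 2 - 2 * ⟪p h • h, g⟫ + p h * ‖g‖ ^ 2)
            = c ^ 2 * ((∑ h ∈ G, p h * ‖h‖ ^ 2) - 2 * ⟪∑ h ∈ G, p h • h, g⟫ + ‖g‖ ^ 2) := by
          rw [← Finset.mul_sum]
          congr 1
          rw [Finset.sum_add_distrib, Finset.sum_sub_distrib, ← Finset.mul_sum, ← sum_inner,
            ← Finset.sum_mul, hp1, one_mul]
        rw [Finset.sum_add_distrib, Finset.sum_add_distrib, s1, s2, s3]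
    _ ≤ ‖a‖ ^ 2 + c ^ 2 * (M ^ 2 - ‖g‖ ^ 2) := by
        have hz : ∑ h ∈ G, p h • (h - g) = 0 := by
          have : ∑ h ∈ G, p h • (h - g) = (∑ h ∈ G, p h • h) - (∑ h ∈ G, p h) • g := by
            rw [Finset.sum_smul]
            rw [← Finset.sum_sub_distrib]
            apply Finset.sum_congr rfl
            intro h _
            rw [smul_sub]
          rw [this, hmean, hp1, one_smul, sub_self]
        rw [hz, inner_zero_right, hmean, real_inner_self_eq_norm_sq]
        have hM : ∑ h ∈ G, p h * ‖h‖ ^ 2 ≤ M ^ 2 := by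
          calc ∑ h ∈ G, p h * ‖h‖ ^ 2 ≤ ∑ h ∈ G, p h * M ^ 2 := by
                apply Finset.sum_le_sum
                intro h hh
                exact mul_le_mul_of_nonneg_left
                  (pow_le_pow_left₀ (norm_nonneg _) (hbd h hh) 2) (hp0 h hh)
            _ = M ^ 2 := by rw [← Finset.sum_mul, hp1, one_mul]
        nlinarith [sq_nonneg c, sq_nonneg ‖g‖]

private lemma maurey (G : Finset E) (M : ℝ) (hbd : ∀ h ∈ G, ‖h‖ ≤ M)
    (g : E) (hg : g ∈ convexHull ℝ (G : Set E)) (k : ℕ) (hk : 0 < k) :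
    ∃ y ∈ convexHull ℝ (G : Set E), ‖y - g‖ ^ 2 ≤ (M ^ 2 - ‖g‖ ^ 2) / k := by
  rw [Finset.convexHull_eq] at hg
  obtain ⟨p, hp0, hp1, hmean⟩ := hg
  rw [Finset.centerMass, hp1, inv_one, one_smul] at hmean
  simp only [id] at hmean
  have hD : 0 ≤ M ^ 2 - ‖g‖ ^ 2 := by
    obtain ⟨h, hh, hle⟩ := maurey_step G p M hp0 hp1 g hmean hbd 0 1
    simp only [norm_zero, one_smul, zero_add] at hle
    nlinarith [sq_nonneg ‖h - g‖, norm_nonneg (h - g)]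
  induction k with
  | zero => exact absurd hk (lt_irrefl 0)
  | succ k ih =>
    rcases Nat.eq_zero_or_pos k with hk0 | hkpos
    · subst hk0
      obtain ⟨h, hh, hle⟩ := maurey_step G p M hp0 hp1 g hmean hbd 0 1
      refine ⟨h, subset_convexHull ℝ _ hh, ?_⟩
      simp only [norm_zero, one_smul, zero_add] at hle
      simpa using hle.trans_eq (by norm_num)
    · obtain ⟨y, hy, hyle⟩ := ih hkpos
      obtain ⟨h, hh, hle⟩ := maurey_step G p M hp0 hp1 g hmean hbd
        (((k : ℝ) / (k + 1)) • (y - g)) (1 / ((k : ℝ) + 1))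
      have hk1 : (0:ℝ) < (k : ℝ) + 1 := by positivity
      refine ⟨((k : ℝ) / (k + 1)) • y + (1 / ((k : ℝ) + 1)) • h, ?_, ?_⟩
      · exact (convex_convexHull ℝ _) hy (subset_convexHull ℝ _ hh)
          (by positivity) (by positivity) (by field_simp)
      · have key : ((k : ℝ) / (k + 1)) • y + (1 / ((k : ℝ) + 1)) • h - g
            = ((k : ℝ) / (k + 1)) • (y - g) + (1 / ((k : ℝ) + 1)) • (h - g) := by
          have hne : ((k : ℝ) + 1) ≠ 0 := ne_of_gt (by positivity)
          match_scalars <;> field_simp <;> ring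
        rw [key]
        refine hle.trans ?_
        rw [norm_smul]
        have hnk : ‖(k : ℝ) / (k + 1)‖ = (k : ℝ) / (k + 1) := by
          rw [Real.norm_eq_abs, abs_of_nonneg (by positivity)]
        rw [hnk, mul_pow]
        have hbound : ((k : ℝ) / (k + 1)) ^ 2 * ‖y - g‖ ^ 2
            ≤ ((k : ℝ) / (k + 1)) ^ 2 * ((M ^ 2 - ‖g‖ ^ 2) / k) :=
          mul_le_mul_of_nonneg_left hyle (by positivity)
        have hkR : (0:ℝ) < (k:ℝ) := by exact_mod_cast hkpos
        have : ((k : ℝ) / (k + 1)) ^ 2 * ((M ^ 2 - ‖g‖ ^ 2) / k)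
            + (1 / ((k : ℝ) + 1)) ^ 2 * (M ^ 2 - ‖g‖ ^ 2)
            = (M ^ 2 - ‖g‖ ^ 2) / ((k : ℝ) + 1) := by
          field_simp
        push_cast
        nlinarith [hbound]

end Aux

/-- Let `H₁, …, H_m` be real Hilbert spaces, and for each `i` let
`G_i ⊆ H_i` be a finite set of cardinality `2ⁿ` with `‖h‖ ≤ M_g` for all
`h ∈ G_i`, and let `g_i*` lie in the closure of the convex hull of `G_i`. Then
there exist `ḡ_i` in the convex hull of `G_i` such that
`Σ_i ‖ḡ_i − g_i*‖² ≤ (m·M_g² − Σ_i ‖g_i*‖²)/2ⁿ`. -/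
theorem exists_convex_hull_approx_vector_valued {m : ℕ}
    (H : Fin m → Type*) [∀ i, NormedAddCommGroup (H i)]
    [∀ i, InnerProductSpace ℝ (H i)] [∀ i, CompleteSpace (H i)]
    (n : ℕ) (G : ∀ i, Finset (H i)) (Mg : ℝ)
    (hcard : ∀ i, (G i).card = 2 ^ n)
    (hbd : ∀ i, ∀ h ∈ G i, ‖h‖ ≤ Mg)
    (gstar : ∀ i, H i)
    (hgstar : ∀ i, gstar i ∈ closure (convexHull ℝ ((G i : Set (H i))))) :
    ∃ gbar : ∀ i, H i, (∀ i, gbar i ∈ convexHull ℝ ((G i : Set (H i)))) ∧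
      ∑ i, ‖gbar i - gstar i‖ ^ 2 ≤
        ((m : ℝ) * Mg ^ 2 - ∑ i, ‖gstar i‖ ^ 2) / 2 ^ n := by
  have hclosed : ∀ i, IsClosed (convexHull ℝ ((G i : Set (H i)))) := fun i =>
    ((Set.Finite.isCompact_convexHull ℝ (G i).finite_toSet).isClosed)
  have hmem : ∀ i, gstar i ∈ convexHull ℝ ((G i : Set (H i))) := fun i =>
    (hclosed i).closure_subset (hgstar i)
  have hkpos : 0 < 2 ^ n := Nat.pow_pos (n := n) (by norm_num)
  choose y hy hyle using fun i =>
    maurey (G i) Mg (hbd i) (gstar i) (hmem i) (2 ^ n) hkpos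
  refine ⟨y, hy, ?_⟩
  calc ∑ i, ‖y i - gstar i‖ ^ 2 ≤ ∑ i, (Mg ^ 2 - ‖gstar i‖ ^ 2) / (2 ^ n : ℕ) := by
        exact Finset.sum_le_sum fun i _ => hyle i
    _ = ((m : ℝ) * Mg ^ 2 - ∑ i, ‖gstar i‖ ^ 2) / 2 ^ n := by
        rw [← Finset.sum_div, Finset.sum_sub_distrib, Finset.sum_const,
          Finset.card_univ, Fintype.card_fin]
        push_cast
        ring
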